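/- Let u_n and v_n be the normalized Maclaurin coefficients of e^{ipz}·J_ν(z) and of e^{−ipz}·J_ν(z) respectively (i denotes the imaginary unit). Then the n-th normalized Maclaurin coefficient of cos(pz)·J_ν(z) equals (u_n + v_n)/2 for every n ≥ 0; moreover u_0 = 1, u_1 = ip, v_0 = 1, v_1 = −ip, and for every n ≥ 1: u_{n+1} = (ip(2ν+2n+1)/((n+1)(2ν+n+1)))·u_n + ((p²−1)/((n+1)(2ν+n+1)))·u_{n−1} and v_{n+1} = −(ip(2ν+2n+1)/((n+1)(2ν+n+1)))·v_n + ((p²−1)/((n+1)(2ν+n+1)))·v_{n−1}. -/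

import Mathlib

open Complex

/-- The entire part of the Bessel function of the first kind:
`J_ν(z) = (z/2)^ν * besselSeries ν z`. -/
noncomputable def besselSeries (ν : ℂ) (z : ℂ) : ℂ :=
  ∑' k : ℕ, (-1) ^ k * z ^ (2 * k) / (4 ^ k * (Nat.factorial k : ℂ) * Complex.Gamma (ν + (k : ℂ) + 1))

/-- The normalized `n`-th Maclaurin coefficient of `h(z) * J_ν(z)`:
`Γ(ν+1)` times the `n`-th Maclaurin coefficient of `z ↦ h z * besselSeries ν z`. -/
noncomputable def normCoeff (ν : ℂ) (h : ℂ → ℂ) (n : ℕ) : ℂ :=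
  Complex.Gamma (ν + 1) *
    (iteratedDeriv n (fun z => h z * besselSeries ν z) 0 / (Nat.factorial n : ℂ))

/-!
Write `g = besselSeries ν` and `b_l` for its Maclaurin coefficients. Bessel's equation for
`J_ν = (z/2)^ν g` becomes `z g'' + (2ν+1) g' + z g = 0`, i.e. `(l+2)(2ν+l+2) b_{l+2} = -b_l`.
Substituting `g = e^{-cz} f` shows that `f = e^{cz} g` solves
`z f'' + (2ν+1-2cz) f' + ((1+c²) z - c(2ν+1)) f = 0`, and the coefficient of `z^{n+1}` in this
equation is the three-term recurrence `(n+2)(2ν+n+2) a_{n+2} = c(2ν+2n+3) a_{n+1} - (1+c²) a_n`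
for the coefficients `a_n` of `f`. For `c = ±ip` we have `1 + c² = 1 - p²`, which gives the
recurrences for `u` and `v`. Both differential equations are handled as identities between formal
power series: by the Leibniz rule, the Maclaurin series of `h g` is the product of those of `h`
and `g`. The formula for `cos` is linearity applied to `cos (pz) = (e^{ipz} + e^{-ipz}) / 2`.
-/

open PowerSeries Filter

section ODE
variable {R : Type*} [CommRing R]

theorem ode_mul_of_derivative_eq_smul {E B : R⟦X⟧} {c α : R} (hE : d⁄dX R E = c • E)
    (hB : X * d⁄dX R (d⁄dX R B) + α • d⁄dX R B + X * B = 0) :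
    X * (d⁄dX R (d⁄dX R (E * B)) - (2 * c) • d⁄dX R (E * B) + (1 + c ^ 2) • (E * B))
      + α • d⁄dX R (E * B) - (c * α) • (E * B) = 0 := by
  have hEB : d⁄dX R (E * B) = c • (E * B) + E * d⁄dX R B := by
    rw [Derivation.leibniz, hE, smul_eq_mul, smul_eq_mul, smul_eq_C_mul, smul_eq_C_mul]; ring
  have hEB' : d⁄dX R (d⁄dX R (E * B)) = c • d⁄dX R (E * B) + c • (E * d⁄dX R B)
      + E * d⁄dX R (d⁄dX R B) := by
    conv_lhs => rw [hEB]
    rw [map_add, Derivation.map_smul, Derivation.leibniz (d⁄dX R) E (d⁄dX R B), hE, smul_eq_mul,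
      smul_eq_mul, smul_eq_C_mul, smul_eq_C_mul, smul_eq_C_mul]
    ring
  rw [hEB', hEB]
  simp only [smul_eq_C_mul, map_mul, map_add, map_pow, map_ofNat, map_one] at hB ⊢
  linear_combination E * hB

theorem coeff_recurrence_of_ode {A : R⟦X⟧} {c α : R}
    (hA : X * (d⁄dX R (d⁄dX R A) - (2 * c) • d⁄dX R A + (1 + c ^ 2) • A)
      + α • d⁄dX R A - (c * α) • A = 0) (n : ℕ) :
    (n + 2) * (n + 1 + α) * coeff (n + 2) A
      = c * (2 * n + 2 + α) * coeff (n + 1) A - (1 + c ^ 2) * coeff n A := by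
  have := congrArg (coeff (n + 1)) hA
  simp only [map_add, map_sub, coeff_succ_X_mul, coeff_smul, smul_eq_mul, coeff_derivative,
    map_zero] at this
  push_cast at this
  linear_combination this

end ODE

theorem derivative_mk_pow_div_factorial {K : Type*} [Field K] [CharZero K] (c : K) :
    d⁄dX K (mk fun n => c ^ n / n.factorial) = c • mk fun n => c ^ n / n.factorial := by
  ext n
  rw [coeff_derivative, coeff_smul, coeff_mk, coeff_mk, Nat.factorial_succ, smul_eq_mul]
  push_cast
  field_simp
  ring

noncomputable def besselTerm (ν : ℂ) (k : ℕ) : ℂ :=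
  (-1) ^ k / (4 ^ k * (k.factorial : ℂ) * Gamma (ν + k + 1))

noncomputable def besselCoeff (ν : ℂ) (l : ℕ) : ℂ :=
  if Even l then besselTerm ν (l / 2) else 0

section BesselCoeff
variable (ν : ℂ)

theorem besselTerm_ne_zero {k : ℕ} (h : Gamma (ν + k + 1) ≠ 0) : besselTerm ν k ≠ 0 := by
  simp [besselTerm, h, Nat.factorial_ne_zero]

-- At a pole `ν + k + 1 = 0` both sides vanish, since Mathlib's `Gamma 0` is `0`.
theorem mul_besselTerm_succ (k : ℕ) :
    4 * (k + 1) * (ν + k + 1) * besselTerm ν (k + 1) = -besselTerm ν k := by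
  rcases eq_or_ne (ν + k + 1) 0 with h | h
  · simp [besselTerm, h, Gamma_zero]
  have hΓ : Gamma (ν + (k + 1) + 1) = (ν + k + 1) * Gamma (ν + k + 1) := by
    rw [← Gamma_add_one _ h]; ring_nf
  have hk : (4 * (k + 1) : ℂ) ≠ 0 := by norm_cast
  have hsucc : besselTerm ν (k + 1) = -besselTerm ν k / (4 * (k + 1) * (ν + k + 1)) := by
    simp only [besselTerm, hΓ, pow_succ, Nat.factorial_succ, Nat.cast_mul, Nat.cast_succ]
    generalize (k : ℂ) + 1 = m, ν + k + 1 = a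
    ring
  rw [hsucc, mul_div_cancel₀ _ (mul_ne_zero hk h)]

theorem besselCoeff_two_mul (k : ℕ) : besselCoeff ν (2 * k) = besselTerm ν k := by
  simp [besselCoeff]

theorem besselCoeff_of_not_even {l : ℕ} (hl : ¬Even l) : besselCoeff ν l = 0 := if_neg hl

theorem besselCoeff_zero : besselCoeff ν 0 = (Gamma (ν + 1))⁻¹ := by
  simp [besselCoeff, besselTerm]

theorem besselCoeff_one : besselCoeff ν 1 = 0 := besselCoeff_of_not_even ν (by decide)

theorem mul_besselCoeff_add_two (l : ℕ) :
    (l + 2) * (2 * ν + l + 2) * besselCoeff ν (l + 2) = -besselCoeff ν l := by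
  obtain ⟨k, rfl | rfl⟩ := Nat.even_or_odd' l
  · rw [show 2 * k + 2 = 2 * (k + 1) by ring, besselCoeff_two_mul, besselCoeff_two_mul,
      ← mul_besselTerm_succ]
    push_cast
    ring
  · rw [besselCoeff_of_not_even ν (Nat.not_even_iff_odd.mpr ⟨k + 1, by ring⟩),
      besselCoeff_of_not_even ν (Nat.not_even_iff_odd.mpr ⟨k, rfl⟩), mul_zero, neg_zero]

theorem besselCoeff_ode :
    X * d⁄dX ℂ (d⁄dX ℂ (mk (besselCoeff ν))) + (2 * ν + 1) • d⁄dX ℂ (mk (besselCoeff ν))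
      + X * mk (besselCoeff ν) = 0 := by
  ext (_ | l)
  · rw [map_add, map_add, coeff_zero_X_mul, coeff_zero_X_mul, coeff_smul, coeff_derivative,
      coeff_mk, zero_add, besselCoeff_one]
    simp
  · simp only [map_add, coeff_succ_X_mul, coeff_smul, smul_eq_mul, coeff_derivative, coeff_mk,
      map_zero]
    push_cast
    linear_combination mul_besselCoeff_add_two ν l

end BesselCoeff

section BesselSeries
variable (ν : ℂ)

theorem radius_ofScalars_besselTerm :
    (FormalMultilinearSeries.ofScalars ℂ (besselTerm ν)).radius = ⊤ := by
  have hre : Tendsto (fun k : ℕ => (ν + k + 1).re) atTop atTop := by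
    simp only [add_re, natCast_re, one_re]
    exact tendsto_atTop_add_const_right _ _ (tendsto_atTop_add_const_left _ _
      tendsto_natCast_atTop_atTop)
  have hpos : ∀ᶠ k : ℕ in atTop, 0 < (ν + k + 1).re := hre.eventually_gt_atTop 0
  have hnorm : Tendsto (fun k : ℕ => ‖(4 * (k + 1) * (ν + k + 1) : ℂ)‖) atTop atTop := by
    refine tendsto_atTop_mono (fun k => ?_) hre
    have h4 : (1 : ℝ) ≤ ‖(4 * (k + 1) : ℂ)‖ := by
      rw [show (4 * (k + 1) : ℂ) = ((4 * (k + 1) : ℕ) : ℂ) by push_cast; ring, norm_natCast]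
      exact_mod_cast Nat.succ_le_of_lt (by omega)
    rw [norm_mul]
    exact (re_le_norm _).trans (le_mul_of_one_le_left (norm_nonneg _) h4)
  refine FormalMultilinearSeries.ofScalars_radius_eq_top_of_tendsto ℂ _
    (hpos.mono fun k hk => besselTerm_ne_zero ν (Gamma_ne_zero_of_re_pos hk)) ?_
  refine hnorm.inv_tendsto_atTop.congr' (hpos.mono fun k hk => ?_)
  have hsucc : besselTerm ν (k + 1) ≠ 0 := fun h0 => besselTerm_ne_zero ν
    (Gamma_ne_zero_of_re_pos hk) (by simpa [h0] using (mul_besselTerm_succ ν k).symm)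
  simp only [Pi.inv_apply, Nat.succ_eq_add_one]
  rw [← norm_neg (besselTerm ν k), ← mul_besselTerm_succ, norm_mul _ (besselTerm ν (k + 1)),
    div_mul_cancel_right₀ (norm_ne_zero_iff.mpr hsucc)]

theorem summable_norm_besselTerm_mul_pow (z : ℂ) :
    Summable fun k => ‖besselTerm ν k * z ^ (2 * k)‖ := by
  have hr : ((‖z‖₊ ^ 2 : NNReal) : ENNReal)
      < (FormalMultilinearSeries.ofScalars ℂ (besselTerm ν)).radius := by
    rw [radius_ofScalars_besselTerm]; exact ENNReal.coe_lt_top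
  refine (FormalMultilinearSeries.summable_norm_mul_pow _ hr).congr fun k => ?_
  simp [pow_mul]

theorem besselCoeff_eq_zero_of_notMem_range {l : ℕ} (hl : l ∉ Set.range (2 * ·)) :
    besselCoeff ν l = 0 :=
  besselCoeff_of_not_even ν fun ⟨r, hr⟩ => hl ⟨r, by simp [hr, two_mul]⟩

theorem summable_norm_besselCoeff_mul_pow (z : ℂ) :
    Summable fun l => ‖besselCoeff ν l * z ^ l‖ := by
  rw [← (mul_right_injective₀ two_ne_zero).summable_iff fun l hl => by
    rw [besselCoeff_eq_zero_of_notMem_range ν hl, zero_mul, norm_zero]]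
  simpa [Function.comp_def, besselCoeff_two_mul] using summable_norm_besselTerm_mul_pow ν z

theorem hasSum_besselSeries (z : ℂ) :
    HasSum (fun l => besselCoeff ν l * z ^ l) (besselSeries ν z) := by
  rw [← (mul_right_injective₀ two_ne_zero).hasSum_iff fun l hl => by
    rw [besselCoeff_eq_zero_of_notMem_range ν hl, zero_mul]]
  have hseries : besselSeries ν z = ∑' k, besselTerm ν k * z ^ (2 * k) :=
    tsum_congr fun k => by rw [besselTerm]; ring
  simpa [hseries, Function.comp_def, besselCoeff_two_mul]
    using (summable_norm_besselTerm_mul_pow ν z).of_norm.hasSum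

theorem hasFPowerSeriesOnBall_besselSeries :
    HasFPowerSeriesOnBall (besselSeries ν)
      (FormalMultilinearSeries.ofScalars ℂ (besselCoeff ν)) 0 ⊤ where
  r_le := by
    refine (FormalMultilinearSeries.radius_eq_top_of_summable_norm _ fun r => ?_).ge
    simpa [FormalMultilinearSeries.ofScalars_norm] using summable_norm_besselCoeff_mul_pow ν r
  r_pos := ENNReal.zero_lt_top
  hasSum _ := by
    simpa [FormalMultilinearSeries.ofScalars_apply_eq, mul_comm] using hasSum_besselSeries ν _

end BesselSeries

noncomputable def taylorSeries (f : ℂ → ℂ) : ℂ⟦X⟧ :=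
  mk fun n => iteratedDeriv n f 0 / n.factorial

section TaylorSeries
variable {f g : ℂ → ℂ}

theorem taylorSeries_mul (hf : AnalyticAt ℂ f 0) (hg : AnalyticAt ℂ g 0) :
    taylorSeries (fun z => f z * g z) = taylorSeries f * taylorSeries g := by
  ext n
  simp only [taylorSeries, coeff_mk, coeff_mul, iteratedDeriv_fun_mul hf.contDiffAt hg.contDiffAt,
    Finset.sum_div, Finset.Nat.sum_antidiagonal_eq_sum_range_succ_mk]
  refine Finset.sum_congr rfl fun i hi => ?_
  rw [Nat.cast_choose ℂ (Finset.mem_range_succ_iff.mp hi)]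
  field_simp [Nat.factorial_ne_zero]

theorem taylorSeries_add (hf : AnalyticAt ℂ f 0) (hg : AnalyticAt ℂ g 0) :
    taylorSeries (fun z => f z + g z) = taylorSeries f + taylorSeries g := by
  ext n
  simp [taylorSeries, iteratedDeriv_fun_add hf.contDiffAt hg.contDiffAt, add_div]

theorem taylorSeries_const_mul (c : ℂ) (f : ℂ → ℂ) :
    taylorSeries (fun z => c * f z) = c • taylorSeries f := by
  ext n
  simp [taylorSeries, iteratedDeriv_const_mul_field, mul_div_assoc]

theorem taylorSeries_eq_mk_of_hasFPowerSeriesAt {a : ℕ → ℂ}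
    (hf : HasFPowerSeriesAt f (FormalMultilinearSeries.ofScalars ℂ a) 0) :
    taylorSeries f = mk a := by
  have := FormalMultilinearSeries.ofScalars_series_injective ℂ ℂ
    (hf.analyticAt.hasFPowerSeriesAt.eq_formalMultilinearSeries hf)
  rw [taylorSeries, this]

theorem taylorSeries_cexp_const_mul (c : ℂ) :
    taylorSeries (fun z => Complex.exp (c * z)) = mk fun n => c ^ n / n.factorial := by
  ext n
  simp [taylorSeries, iteratedDeriv_cexp_const_mul]

end TaylorSeries

section NormCoeff
variable (ν : ℂ)

theorem normCoeff_eq_coeff_mul {h : ℂ → ℂ} (hh : AnalyticAt ℂ h 0) (n : ℕ) :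
    normCoeff ν h n = Gamma (ν + 1) * coeff n (taylorSeries h * mk (besselCoeff ν)) := by
  have hB := (hasFPowerSeriesOnBall_besselSeries ν).hasFPowerSeriesAt
  rw [← taylorSeries_eq_mk_of_hasFPowerSeriesAt hB, ← taylorSeries_mul hh hB.analyticAt]
  simp [normCoeff, taylorSeries]

theorem normCoeff_cexp_const_mul (c : ℂ) (n : ℕ) :
    normCoeff ν (fun z => Complex.exp (c * z)) n
      = Gamma (ν + 1) * coeff n ((mk fun k => c ^ k / k.factorial) * mk (besselCoeff ν)) := by
  rw [normCoeff_eq_coeff_mul ν (by fun_prop), taylorSeries_cexp_const_mul]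

theorem mul_normCoeff_cexp_const_mul_add_two (c : ℂ) (n : ℕ) :
    (n + 2) * (2 * ν + n + 2) * normCoeff ν (fun z => Complex.exp (c * z)) (n + 2)
      = c * (2 * ν + 2 * n + 3) * normCoeff ν (fun z => Complex.exp (c * z)) (n + 1)
        - (1 + c ^ 2) * normCoeff ν (fun z => Complex.exp (c * z)) n := by
  have := coeff_recurrence_of_ode
    (ode_mul_of_derivative_eq_smul (derivative_mk_pow_div_factorial c) (besselCoeff_ode ν)) n
  simp only [normCoeff_cexp_const_mul]
  linear_combination Gamma (ν + 1) * this

theorem normCoeff_cexp_const_mul_zero (hν : Gamma (ν + 1) ≠ 0) (c : ℂ) :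
    normCoeff ν (fun z => Complex.exp (c * z)) 0 = 1 := by
  simp [normCoeff_cexp_const_mul, besselCoeff_zero, hν]

theorem normCoeff_cexp_const_mul_one (hν : Gamma (ν + 1) ≠ 0) (c : ℂ) :
    normCoeff ν (fun z => Complex.exp (c * z)) 1 = c := by
  simp [normCoeff_cexp_const_mul, coeff_mul, Finset.Nat.sum_antidiagonal_succ, besselCoeff_zero,
    besselCoeff_one, mul_left_comm _ c, hν]

theorem normCoeff_cos_const_mul (p : ℂ) (n : ℕ) :
    normCoeff ν (fun z => Complex.cos (p * z)) n
      = (normCoeff ν (fun z => Complex.exp (I * p * z)) n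
          + normCoeff ν (fun z => Complex.exp (-(I * p) * z)) n) / 2 := by
  have hcos : (fun z => Complex.cos (p * z))
      = fun z => 2⁻¹ * Complex.exp (I * p * z) + 2⁻¹ * Complex.exp (-(I * p) * z) := by
    ext z
    rw [Complex.cos]
    ring_nf
  rw [normCoeff_eq_coeff_mul ν (by fun_prop), normCoeff_eq_coeff_mul ν (by fun_prop),
    normCoeff_eq_coeff_mul ν (by fun_prop), hcos, taylorSeries_add (by fun_prop) (by fun_prop),
    taylorSeries_const_mul, taylorSeries_const_mul]
  simp only [add_mul, smul_mul_assoc, map_add, coeff_smul, smul_eq_mul]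
  ring

end NormCoeff

theorem cos_besselJ_coeff_recurrence (ν p : ℂ) (hν : ∀ n : ℕ, 2 * ν + (n : ℂ) + 1 ≠ 0)
    (u : ℕ → ℂ) (hu : ∀ n, u n = normCoeff ν (fun z => Complex.exp (Complex.I * p * z)) n)
    (v : ℕ → ℂ) (hv : ∀ n, v n = normCoeff ν (fun z => Complex.exp (-(Complex.I * p) * z)) n)
    (w : ℕ → ℂ) (hw : ∀ n, w n = normCoeff ν (fun z => Complex.cos (p * z)) n) :
    (∀ n : ℕ, w n = (u n + v n) / 2) ∧ u 0 = 1 ∧ u 1 = Complex.I * p ∧ v 0 = 1 ∧ v 1 = -(Complex.I * p) ∧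
    (∀ n : ℕ, 1 ≤ n →
      u (n + 1) = (Complex.I * p * (2 * ν + 2 * ((n : ℂ)) + 1) / ((((n : ℂ)) + 1) * (2 * ν + ((n : ℂ)) + 1))) * u n + ((p ^ 2 - 1) / ((((n : ℂ)) + 1) * (2 * ν + ((n : ℂ)) + 1))) * u (n - 1) ∧
      v (n + 1) = (-(Complex.I * p * (2 * ν + 2 * ((n : ℂ)) + 1)) / ((((n : ℂ)) + 1) * (2 * ν + ((n : ℂ)) + 1))) * v n + ((p ^ 2 - 1) / ((((n : ℂ)) + 1) * (2 * ν + ((n : ℂ)) + 1))) * v (n - 1)) := by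
  have hΓ : Gamma (ν + 1) ≠ 0 := Gamma_ne_zero fun m hm =>
    hν (2 * m + 1) (by push_cast; linear_combination 2 * hm)
  have hrec : ∀ c : ℂ, c ^ 2 = -p ^ 2 → ∀ n : ℕ, 1 ≤ n →
      normCoeff ν (fun z => Complex.exp (c * z)) (n + 1)
        = c * (2 * ν + 2 * (n : ℂ) + 1) / (((n : ℂ) + 1) * (2 * ν + (n : ℂ) + 1))
            * normCoeff ν (fun z => Complex.exp (c * z)) n
          + (p ^ 2 - 1) / (((n : ℂ) + 1) * (2 * ν + (n : ℂ) + 1))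
            * normCoeff ν (fun z => Complex.exp (c * z)) (n - 1) := by
    intro c hc n hn
    obtain ⟨m, rfl⟩ := Nat.exists_eq_add_of_le' hn
    have hD : ((m + 1 : ℕ) + 1 : ℂ) * (2 * ν + (m + 1 : ℕ) + 1) ≠ 0 :=
      mul_ne_zero (by norm_cast) (hν (m + 1))
    rw [div_mul_eq_mul_div, div_mul_eq_mul_div, ← add_div, eq_div_iff hD, Nat.add_sub_cancel]
    push_cast
    linear_combination mul_normCoeff_cexp_const_mul_add_two ν c m - normCoeff ν _ m * hc
  have hsq : (I * p) ^ 2 = -p ^ 2 := by rw [mul_pow, I_sq]; ring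
  simp only [hu, hv, hw]
  refine ⟨fun n => normCoeff_cos_const_mul ν p n, normCoeff_cexp_const_mul_zero ν hΓ _,
    normCoeff_cexp_const_mul_one ν hΓ _, normCoeff_cexp_const_mul_zero ν hΓ _,
    normCoeff_cexp_const_mul_one ν hΓ _, fun n hn => ⟨hrec _ hsq n hn, ?_⟩⟩
  rw [hrec _ (by rw [neg_sq, hsq]) n hn]
  ring
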